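/- The integer matrix M = [[-3,0,2],[1,2,-3],[0,-1,1]] has determinant 1, and its characteristic polynomial has three real roots r₁, r₂, r₃ (with approximate values -0.11, 3.11, -3.21, ordered so that |r₁| < 1 < |r₂| < |r₃|) satisfying |r₁ r₂| / |r₃| < 1 but r₂² / |r₃| > 1. -/
import Mathlib
open Polynomial


/-- The integer matrix `[[-3,0,2],[1,2,-3],[0,-1,1]]` has determinant 1 and its
characteristic polynomial has three real roots `r₁, r₂, r₃` with
`|r₁| < 1 < |r₂| < |r₃|`, satisfying `|r₁ * r₂| / |r₃| < 1` (volume domination)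
but `r₂ ^ 2 / |r₃| > 1` (failure of center bunching). -/
theorem stmt_4 :
    (Matrix.det (!![-3, 0, 2; 1, 2, -3; 0, -1, 1] : Matrix (Fin 3) (Fin 3) ℝ) = 1) ∧
    ∃ r₁ r₂ r₃ : ℝ,
      (Matrix.charpoly (!![-3, 0, 2; 1, 2, -3; 0, -1, 1] : Matrix (Fin 3) (Fin 3) ℝ)).roots
        = {r₁, r₂, r₃} ∧
      |r₁| < 1 ∧ 1 < |r₂| ∧ |r₂| < |r₃| ∧
      |r₁ * r₂| / |r₃| < 1 ∧ r₂ ^ 2 / |r₃| > 1 := by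
  constructor
  · simp [Matrix.det_fin_three]; norm_num
  -- charpoly = X^3 - 10X - 1
  have hcp : (Matrix.charpoly (!![-3, 0, 2; 1, 2, -3; 0, -1, 1] : Matrix (Fin 3) (Fin 3) ℝ))
      = X^3 - 10*X - 1 := by
    simp [Matrix.charpoly, Matrix.det_fin_three, Matrix.charmatrix_apply, map_ofNat]
    ring
  set f : ℝ → ℝ := fun x => x^3 - 10*x - 1 with hf
  have hcont : ∀ a b : ℝ, ContinuousOn f (Set.Icc a b) := fun a b => by fun_prop
  -- r₁ ∈ [-0.11, -0.09], f decreasing there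
  obtain ⟨r₁, hr₁mem, hr₁⟩ : ∃ x ∈ Set.Icc (-0.11 : ℝ) (-0.09), f x = 0 := by
    have := intermediate_value_Icc' (by norm_num : (-0.11:ℝ) ≤ -0.09) (hcont _ _)
    have h0 : (0:ℝ) ∈ Set.Icc (f (-0.09)) (f (-0.11)) := by
      constructor <;> (simp only [hf]; norm_num)
    obtain ⟨x, hx, hfx⟩ := this h0
    exact ⟨x, hx, hfx⟩
  obtain ⟨r₂, hr₂mem, hr₂⟩ : ∃ x ∈ Set.Icc (-3.15 : ℝ) (-3.1), f x = 0 := by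
    have := intermediate_value_Icc (by norm_num : (-3.15:ℝ) ≤ -3.1) (hcont _ _)
    have h0 : (0:ℝ) ∈ Set.Icc (f (-3.15)) (f (-3.1)) := by
      constructor <;> (simp only [hf]; norm_num)
    obtain ⟨x, hx, hfx⟩ := this h0
    exact ⟨x, hx, hfx⟩
  obtain ⟨r₃, hr₃mem, hr₃⟩ : ∃ x ∈ Set.Icc (3.2 : ℝ) 3.3, f x = 0 := by
    have := intermediate_value_Icc (by norm_num : (3.2:ℝ) ≤ 3.3) (hcont _ _)
    have h0 : (0:ℝ) ∈ Set.Icc (f 3.2) (f 3.3) := by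
      constructor <;> (simp only [hf]; norm_num)
    obtain ⟨x, hx, hfx⟩ := this h0
    exact ⟨x, hx, hfx⟩
  obtain ⟨h1l, h1r⟩ := hr₁mem
  obtain ⟨h2l, h2r⟩ := hr₂mem
  obtain ⟨h3l, h3r⟩ := hr₃mem
  refine ⟨r₁, r₂, r₃, ?_, ?_, ?_, ?_, ?_, ?_⟩
  · -- roots
    rw [hcp]
    have hp0 : (X^3 - 10*X - 1 : ℝ[X]) ≠ 0 := by
      intro h
      have := congrArg (fun p => Polynomial.eval 0 p) h
      simp at this
    have hroot : ∀ r : ℝ, f r = 0 → r ∈ (X^3 - 10*X - 1 : ℝ[X]).roots := by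
      intro r hr
      rw [Polynomial.mem_roots hp0]
      simpa [Polynomial.IsRoot, hf] using hr
    have hle : ({r₁, r₂, r₃} : Multiset ℝ) ≤ (X^3 - 10*X - 1 : ℝ[X]).roots := by
      have hnd : ({r₁, r₂, r₃} : Multiset ℝ).Nodup := by
        simp only [Multiset.insert_eq_cons, Multiset.nodup_cons, Multiset.mem_cons,
          Multiset.mem_singleton, Multiset.nodup_singleton]
        refine ⟨?_, ?_, trivial⟩
        · push_neg
          constructor <;> intro h <;> nlinarith
        · intro h; nlinarith
      rw [Multiset.le_iff_subset hnd]
      intro a ha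
      simp only [Multiset.insert_eq_cons, Multiset.mem_cons, Multiset.mem_singleton] at ha
      rcases ha with rfl | rfl | rfl
      exacts [hroot _ hr₁, hroot _ hr₂, hroot _ hr₃]
    have hcard : Multiset.card (X^3 - 10*X - 1 : ℝ[X]).roots ≤ 3 := by
      have := Polynomial.card_roots' (X^3 - 10*X - 1 : ℝ[X])
      have hdeg : (X^3 - 10*X - 1 : ℝ[X]).natDegree = 3 := by
        compute_degree!
      omega
    refine (Multiset.eq_of_le_of_card_le hle ?_).symm
    simpa using hcard
  · rw [abs_lt]; constructor <;> nlinarith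
  · rw [lt_abs]; right; linarith
  · rw [abs_of_nonpos (by linarith), abs_of_nonneg (by linarith)]; linarith
  · rw [div_lt_one (by rw [abs_of_nonneg (by linarith)]; linarith)]
    rw [abs_mul, abs_of_nonpos (by linarith : r₁ ≤ 0), abs_of_nonpos (by linarith : r₂ ≤ 0),
      abs_of_nonneg (by linarith : (0:ℝ) ≤ r₃)]
    nlinarith
  · rw [gt_iff_lt, lt_div_iff₀ (by rw [abs_of_nonneg (by linarith)]; linarith)]
    rw [abs_of_nonneg (by linarith : (0:ℝ) ≤ r₃)]
    nlinarith
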